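/- arXiv:1806.03531 — 2 statements merged into one kernel-verified Lean document; each statement's English description precedes it below -/
import Mathlib

section
/- Let f⁰ ∈ (ℝ³)^n and f¹ = A(n)f⁰. Then the total Dirichlet energy of the subdivided configuration satisfies ‖f¹ - Tf¹‖² + ‖f⁰ - f¹‖² ≤ λ_1(n) ‖f⁰ - Tf⁰‖², where λ_1(n) = 1/(1+4sin²(π/n)) < 1. -/
open Matrix Real Finset

/-- The cyclic shift permutation matrix: `T eᵢ = e_{i+1}`. -/
def shiftMat (n : ℕ) [NeZero n] : Matrix (Fin n) (Fin n) ℝ :=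
  Matrix.of fun i j => if j = i + 1 then 1 else 0

/-- The matrix `B(n) = 3 Iₙ - T - Tᵗ`. -/
def Bmat (n : ℕ) [NeZero n] : Matrix (Fin n) (Fin n) ℝ :=
  (3 : ℝ) • (1 : Matrix (Fin n) (Fin n) ℝ) - shiftMat n - (shiftMat n)ᵀ

/-- `A(n) = B(n)⁻¹`. -/
noncomputable def Amat (n : ℕ) [NeZero n] : Matrix (Fin n) (Fin n) ℝ := (Bmat n)⁻¹

/-- `λ₁(n) = 1/(1 + 4 sin²(π/n))`. -/
noncomputable def lam1 (n : ℕ) : ℝ := 1 / (1 + 4 * Real.sin (Real.pi / n) ^ 2)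


/-- Componentwise action of an `n × n` matrix on an `n`-tuple of points of `ℝ³`. -/
noncomputable def applyMat {n : ℕ} (M : Matrix (Fin n) (Fin n) ℝ)
    (g : Fin n → EuclideanSpace ℝ (Fin 3)) : Fin n → EuclideanSpace ℝ (Fin 3) :=
  fun i => ∑ j, M i j • g j

/-- The cyclic shift acting on `n`-tuples of points of `ℝ³`. -/
def shiftTup {n : ℕ} [NeZero n] (g : Fin n → EuclideanSpace ℝ (Fin 3)) :
    Fin n → EuclideanSpace ℝ (Fin 3) := fun i => g (i + 1)

/-- `‖g‖² = Σᵢ |gᵢ|²`. -/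
noncomputable def sqE {n : ℕ} (g : Fin n → EuclideanSpace ℝ (Fin 3)) : ℝ :=
  ∑ i, ‖g i‖ ^ 2

/-
Write `D = Δ_[1]` for the forward difference on `ℤ/n` and `L = Δ_[-1] ∘ Δ_[1] = 2 - T - Tᵀ`, so
that `B(n) = 1 + L` and, coordinatewise, `f⁰ = f¹ + L f¹`. Summation by parts gives
`⟪D g, D L g⟫ = ‖L g‖²`, hence `‖D f⁰‖² = ‖D f¹‖² + 2 ‖L f¹‖² + ‖D L f¹‖²`.
The discrete Wirtinger inequality `s ‖w‖² ≤ ‖D w‖²` for mean-zero `w`, where `s = 4 sin²(π/n)` is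
the smallest nonzero eigenvalue of `L` (read off from the discrete Fourier transform), applied to
`w = D f¹` and `w = L f¹` gives `s (‖D f¹‖² + ‖L f¹‖²) ≤ ‖L f¹‖² + ‖D L f¹‖²`. Since
`f⁰ - f¹ = L f¹` and `λ₁(n) = 1 / (1 + s)`, this is the claim.
-/

open fwdDiff

section FiniteGroup

variable {G R : Type*} [AddCommGroup G] [Fintype G] [CommRing R] (t : G)

theorem sum_fwdDiff_eq_zero {M : Type*} [AddCommGroup M] (f : G → M) : ∑ i, Δ_[t] f i = 0 := by
  simp only [fwdDiff, sum_sub_distrib, sub_eq_zero]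
  exact Equiv.sum_comp (Equiv.addRight t) f

theorem sum_fwdDiff_neg_sq (f : G → R) : ∑ i, Δ_[-t] f i ^ 2 = ∑ i, Δ_[t] f i ^ 2 := by
  rw [← Equiv.sum_comp (Equiv.addRight t)]
  refine sum_congr rfl fun i _ => ?_
  simp only [fwdDiff, Equiv.coe_addRight, add_neg_cancel_right]
  ring

theorem sum_mul_fwdDiff (f g : G → R) : ∑ i, f i * Δ_[t] g i = ∑ i, Δ_[-t] f i * g i := by
  have hshift : ∑ i, f i * g (i + t) = ∑ i, f (i + -t) * g i := by
    rw [← Equiv.sum_comp (Equiv.addRight t) (fun i => f (i + -t) * g i)]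
    simp
  simp only [fwdDiff, mul_sub, sub_mul, sum_sub_distrib, hshift]

theorem one_add_mul_subdivision_energy_le {s : ℝ}
    (hW : ∀ w : G → ℝ, ∑ i, w i = 0 → s * ∑ i, w i ^ 2 ≤ ∑ i, Δ_[t] w i ^ 2) (v : G → ℝ) :
    (1 + s) * (∑ i, Δ_[t] v i ^ 2 + ∑ i, Δ_[-t] (Δ_[t] v) i ^ 2) ≤
      ∑ i, Δ_[t] (v + Δ_[-t] (Δ_[t] v)) i ^ 2 := by
  set g := Δ_[t] v
  set h := Δ_[-t] g
  have hcross : ∑ i, g i * Δ_[t] h i = ∑ i, h i ^ 2 := by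
    rw [sum_mul_fwdDiff]; simp only [h, sq]
  have hg := hW g (sum_fwdDiff_eq_zero t v)
  have hh := hW h (sum_fwdDiff_eq_zero (-t) g)
  rw [← sum_fwdDiff_neg_sq t g] at hg
  have hexpand : ∑ i, Δ_[t] (v + h) i ^ 2 =
      ∑ i, g i ^ 2 + 2 * ∑ i, g i * Δ_[t] h i + ∑ i, Δ_[t] h i ^ 2 := by
    simp only [fwdDiff_add, Pi.add_apply, add_sq, sum_add_distrib, mul_sum, mul_assoc]
    rfl
  rw [hexpand, hcross]
  linarith

end FiniteGroup

theorem Real.sin_le_sin_of_le_of_le_pi_sub {a x : ℝ} (ha : -(π / 2) ≤ a) (hax : a ≤ x)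
    (hx : x ≤ π - a) : sin a ≤ sin x := by
  rw [← sub_nonneg, sin_sub_sin]
  have hsin : 0 ≤ sin ((x - a) / 2) :=
    sin_nonneg_of_nonneg_of_le_pi (by linarith) (by linarith)
  have hcos : 0 ≤ cos ((x + a) / 2) :=
    cos_nonneg_of_neg_pi_div_two_le_of_le (by linarith) (by linarith)
  positivity

namespace ZMod

open Complex ComplexConjugate

variable {N : ℕ} [NeZero N]

theorem dft_fwdDiff (h : ZMod N) (Φ : ZMod N → ℂ) (k : ZMod N) :
    𝓕 (Δ_[h] Φ) k = (stdAddChar (h * k) - 1) * 𝓕 Φ k := by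
  have hshift : 𝓕 (fun j => Φ (j + h)) k = stdAddChar (h * k) * 𝓕 Φ k := by
    rw [dft_apply, dft_apply, mul_sum, ← Equiv.sum_comp (Equiv.subRight h)]
    refine sum_congr rfl fun j _ => ?_
    simp only [Equiv.subRight_apply, sub_add_cancel, smul_eq_mul, ← mul_assoc,
      ← AddChar.map_add_eq_mul]
    congr 2; ring
  have hdiff : Δ_[h] Φ = (fun j => Φ (j + h)) - Φ := rfl
  rw [hdiff, map_sub, Pi.sub_apply, hshift, sub_mul, one_mul]

theorem conj_dft (Φ : ZMod N → ℂ) (k : ZMod N) :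
    conj (𝓕 Φ k) = 𝓕 (conj Φ) (-k) := by
  simp only [dft_apply, map_sum, smul_eq_mul, map_mul, stdAddChar_apply, ← Circle.coe_inv_eq_conj,
    ← AddChar.map_neg_eq_inv, mul_neg, neg_neg, Pi.conj_apply]

theorem sum_normSq_dft (Φ : ZMod N → ℂ) :
    ∑ k, normSq (𝓕 Φ k) = N * ∑ j, normSq (Φ j) := by
  have hinv (j : ZMod N) : ∑ k, stdAddChar (-(j * k)) * 𝓕 (conj Φ) (-k) = N * conj (Φ j) := by
    have h := congrFun (dft_dft (conj Φ)) (-j)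
    rw [dft_apply, neg_neg] at h
    rw [← Equiv.sum_comp (Equiv.neg _)]
    simpa [mul_comm j] using h
  have key : ∑ k, 𝓕 Φ k * conj (𝓕 Φ k) = N * ∑ j, Φ j * conj (Φ j) := by
    calc ∑ k, 𝓕 Φ k * conj (𝓕 Φ k)
        = ∑ k, ∑ j, Φ j * (stdAddChar (-(j * k)) * 𝓕 (conj Φ) (-k)) := by
          refine sum_congr rfl fun k _ => ?_
          rw [conj_dft, dft_apply, sum_mul]
          exact sum_congr rfl fun j _ => by rw [smul_eq_mul]; ring
      _ = ∑ j, Φ j * ∑ k, stdAddChar (-(j * k)) * 𝓕 (conj Φ) (-k) := by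
          rw [sum_comm]
          simp_rw [mul_sum]
      _ = N * ∑ j, Φ j * conj (Φ j) := by
          rw [mul_sum]
          exact sum_congr rfl fun j _ => by rw [hinv]; ring
  simp_rw [mul_conj] at key
  exact_mod_cast key

theorem normSq_stdAddChar_sub_one (k : ZMod N) :
    normSq (stdAddChar k - 1) = 4 * Real.sin (π * k.val / N) ^ 2 := by
  have hre : (stdAddChar k).re = Real.cos (2 * (π * k.val / N)) := by
    rw [stdAddChar_apply, toCircle_eq_circleExp, Circle.coe_exp, exp_ofReal_mul_I_re]
    ring_nf
  have hnorm : ‖stdAddChar k‖ = 1 := by rw [stdAddChar_apply, Circle.norm_coe]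
  rw [← Complex.sq_norm, norm_sub_one_sq_eq_of_norm_eq_one hnorm, hre, Real.cos_two_mul,
    Real.cos_sq']
  ring

theorem sin_sq_pi_div_le_sin_sq_pi_mul_val_div {k : ZMod N} (hk : k ≠ 0) :
    Real.sin (π / N) ^ 2 ≤ Real.sin (π * k.val / N) ^ 2 := by
  have hN : (0 : ℝ) < N := by exact_mod_cast NeZero.pos N
  have hk1 : (1 : ℝ) ≤ k.val := by
    exact_mod_cast Nat.one_le_iff_ne_zero.mpr ((val_ne_zero k).mpr hk)
  have hkN : (k.val : ℝ) + 1 ≤ N := by exact_mod_cast k.val_lt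
  have h1N : (1 : ℝ) ≤ N := by linarith
  have hpos : 0 < π / N := by positivity
  gcongr
  · exact sin_nonneg_of_nonneg_of_le_pi hpos.le (div_le_self pi_pos.le h1N)
  · apply Real.sin_le_sin_of_le_of_le_pi_sub (by linarith [pi_pos])
    · rw [div_le_div_iff_of_pos_right hN]; nlinarith [pi_pos]
    · rw [div_le_iff₀ hN, sub_mul, div_mul_cancel₀ _ hN.ne']; nlinarith [pi_pos]

theorem four_sin_sq_mul_sum_sq_le_sum_sq_fwdDiff (g : ZMod N → ℝ) (hg : ∑ i, g i = 0) :
    4 * Real.sin (π / N) ^ 2 * ∑ i, g i ^ 2 ≤ ∑ i, Δ_[1] g i ^ 2 := by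
  set Φ : ZMod N → ℂ := fun j => g j
  have hmode (k : ZMod N) :
      4 * Real.sin (π / N) ^ 2 * normSq (𝓕 Φ k) ≤ normSq (𝓕 (Δ_[1] Φ) k) := by
    rw [dft_fwdDiff, one_mul, normSq_mul, normSq_stdAddChar_sub_one]
    rcases eq_or_ne k 0 with rfl | hk
    · simp [dft_apply_zero, Φ, ← ofReal_sum, hg]
    · have := sin_sq_pi_div_le_sin_sq_pi_mul_val_div hk
      gcongr
      exact normSq_nonneg _
  have hsum := sum_le_sum fun k (_ : k ∈ univ) => hmode k
  rw [← mul_sum, sum_normSq_dft, sum_normSq_dft] at hsum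
  have hΔ : Δ_[1] Φ = fun j => ((Δ_[1] g j : ℝ) : ℂ) := by
    funext j; simp [fwdDiff, Φ]
  simp only [hΔ, Φ, normSq_ofReal, ← sq] at hsum
  have hN : (0 : ℝ) < N := by exact_mod_cast NeZero.pos N
  nlinarith

end ZMod

theorem Fin.four_sin_sq_mul_sum_sq_le_sum_sq_fwdDiff {n : ℕ} [NeZero n] (g : Fin n → ℝ)
    (hg : ∑ i, g i = 0) : 4 * Real.sin (π / n) ^ 2 * ∑ i, g i ^ 2 ≤ ∑ i, Δ_[1] g i ^ 2 := by
  let e := ZMod.finEquiv n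
  have hΔ (i : Fin n) : Δ_[1] (g ∘ e.symm) (e i) = Δ_[1] g i := by
    simp only [fwdDiff, Function.comp_apply, ← map_one e, ← map_add, RingEquiv.symm_apply_apply]
  have key := ZMod.four_sin_sq_mul_sum_sq_le_sum_sq_fwdDiff (g ∘ e.symm)
    (by rw [← hg]; exact Equiv.sum_comp e.symm.toEquiv g)
  rw [← Equiv.sum_comp e.toEquiv, ← Equiv.sum_comp e.toEquiv (fun k => Δ_[1] _ k ^ 2)] at key
  simpa [hΔ] using key

theorem lam1_lt_one {n : ℕ} (hn : 1 < n) : lam1 n < 1 := by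
  have hsin : 0 < Real.sin (π / n) := by
    have : (1 : ℝ) < n := by exact_mod_cast hn
    exact sin_pos_of_pos_of_lt_pi (by positivity) (div_lt_self pi_pos this)
  rw [lam1, div_lt_one (by positivity)]
  nlinarith

section Matrices

variable {n : ℕ} [NeZero n]

theorem Bmat_mulVec (x : Fin n → ℝ) : Bmat n *ᵥ x = x + Δ_[-1] (Δ_[1] x) := by
  funext i
  have hT : (shiftMat n *ᵥ x) i = x (i + 1) := by
    simp [shiftMat, mulVec, dotProduct]
  have hTt : ((shiftMat n)ᵀ *ᵥ x) i = x (i - 1) := by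
    simp [shiftMat, mulVec, dotProduct, eq_comm (a := i), ← eq_sub_iff_add_eq]
  simp only [Bmat, sub_mulVec, smul_mulVec, one_mulVec, Pi.sub_apply, Pi.smul_apply, hT, hTt,
    Pi.add_apply, fwdDiff, smul_eq_mul, ← sub_eq_add_neg, sub_add_cancel]
  ring

theorem Bmat_det_ne_zero : (Bmat n).det ≠ 0 := by
  rw [Ne, ← exists_mulVec_eq_zero_iff]
  rintro ⟨v, hv, hBv⟩
  have henergy : ∑ i, v i ^ 2 + ∑ i, Δ_[1] v i ^ 2 = 0 := by
    calc ∑ i, v i ^ 2 + ∑ i, Δ_[1] v i ^ 2 = v ⬝ᵥ (Bmat n *ᵥ v) := by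
          simp only [Bmat_mulVec, dotProduct, Pi.add_apply, mul_add, sum_add_distrib,
            sum_mul_fwdDiff, neg_neg, sq]
      _ = 0 := by rw [hBv, dotProduct_zero]
  have hsq : ∑ i, v i ^ 2 = 0 := by
    have := sum_nonneg fun i (_ : i ∈ univ) => sq_nonneg (v i)
    have := sum_nonneg fun i (_ : i ∈ univ) => sq_nonneg (Δ_[1] v i)
    linarith
  rw [sum_eq_zero_iff_of_nonneg fun i _ => sq_nonneg (v i)] at hsq
  exact hv (funext fun i => pow_eq_zero_iff two_ne_zero |>.mp (hsq i (mem_univ i)))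

theorem Bmat_mulVec_Amat_mulVec (x : Fin n → ℝ) : Bmat n *ᵥ (Amat n *ᵥ x) = x := by
  rw [Amat, mulVec_mulVec, mul_nonsing_inv _ (isUnit_iff_ne_zero.mpr Bmat_det_ne_zero),
    one_mulVec]

theorem one_add_four_sin_sq_mul_subdivision_energy_le (u : Fin n → ℝ) :
    (1 + 4 * Real.sin (π / n) ^ 2) *
        (∑ i, Δ_[1] (Amat n *ᵥ u) i ^ 2 + ∑ i, (u i - (Amat n *ᵥ u) i) ^ 2) ≤
      ∑ i, Δ_[1] u i ^ 2 := by
  have hu : u = Amat n *ᵥ u + Δ_[-1] (Δ_[1] (Amat n *ᵥ u)) := by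
    rw [← Bmat_mulVec, Bmat_mulVec_Amat_mulVec]
  generalize Amat n *ᵥ u = v at hu ⊢
  subst hu
  simp only [Pi.add_apply, add_sub_cancel_left]
  exact one_add_mul_subdivision_energy_le (1 : Fin n) Fin.four_sin_sq_mul_sum_sq_le_sum_sq_fwdDiff v

end Matrices

section Coordinates

variable {n : ℕ}

theorem applyMat_apply_apply (M : Matrix (Fin n) (Fin n) ℝ) (g : Fin n → EuclideanSpace ℝ (Fin 3))
    (i : Fin n) (j : Fin 3) : applyMat M g i j = (M *ᵥ fun k => g k j) i := by
  simp [applyMat, mulVec, dotProduct]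

theorem sqE_eq_sum_sum (g : Fin n → EuclideanSpace ℝ (Fin 3)) :
    sqE g = ∑ j, ∑ i, g i j ^ 2 := by
  rw [sqE, sum_comm]
  simp [EuclideanSpace.norm_sq_eq]

theorem sqE_sub (g h : Fin n → EuclideanSpace ℝ (Fin 3)) :
    sqE (g - h) = ∑ j, ∑ i, (g i j - h i j) ^ 2 := by
  simp [sqE_eq_sum_sum]

theorem sqE_sub_shiftTup [NeZero n] (g : Fin n → EuclideanSpace ℝ (Fin 3)) :
    sqE (g - shiftTup g) = ∑ j, ∑ i, Δ_[1] (fun i => g i j) i ^ 2 := by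
  rw [sqE_sub]
  exact sum_congr rfl fun j _ => sum_congr rfl fun i _ => sub_sq_comm _ _

end Coordinates

theorem stmt8 (n : ℕ) [NeZero n] (hn : 3 ≤ n) (f0 : Fin n → EuclideanSpace ℝ (Fin 3)) :
    sqE (applyMat (Amat n) f0 - shiftTup (applyMat (Amat n) f0)) +
        sqE (f0 - applyMat (Amat n) f0) ≤
      lam1 n * sqE (f0 - shiftTup f0) ∧ lam1 n < 1 := by
  refine ⟨?_, lam1_lt_one (by omega)⟩
  rw [sqE_sub_shiftTup, sqE_sub, sqE_sub_shiftTup, ← sum_add_distrib, lam1, one_div,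
    le_inv_mul_iff₀ (by positivity), mul_sum]
  gcongr with j
  simpa only [applyMat_apply_apply] using
    one_add_four_sin_sq_mul_subdivision_energy_le fun i => f0 i j
end

section
/- For f⁰ an n-tuple of points in ℝ³ and f^{(k)} = A(n)^k f⁰, the edge energy decays geometrically: ‖f^{(k)} - Tf^{(k)}‖² ≤ λ_1(n)^{2k} ‖f⁰ - Tf⁰‖². -/
/-!
Since `B = 3I - T - Tᵗ` commutes with the shift `T`, so do `A = B⁻¹` and its powers, hence
`f⁽ᵏ⁾ - T f⁽ᵏ⁾ = Aᵏ (f⁰ - T f⁰)`; and since the columns of `B` sum to `1`, `A` preserves tuples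
with zero sum, such as `f⁰ - T f⁰`. On such a tuple `u` the discrete Wirtinger inequality
`‖u - T u‖² ≥ 4 sin²(π/n) ‖u‖²` holds: the characters of `ℤ/n` diagonalise `T` with eigenvalues
the `n`-th roots of unity, and the trivial character does not see `u`. Hence
`⟪u, B u⟫ = ‖u‖² + ‖u - T u‖² ≥ λ₁⁻¹ ‖u‖²`, and Cauchy–Schwarz turns this into `‖A g‖ ≤ λ₁ ‖g‖`
on zero-sum tuples `g`.
-/

open Matrix Real Finset

lemma sum_comp_add_right {G M : Type*} [AddGroup G] [Fintype G] [AddCommMonoid M] (f : G → M)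
    (a : G) : ∑ x, f (x + a) = ∑ x, f x :=
  Fintype.sum_equiv (Equiv.addRight a) _ _ fun _ => rfl

lemma mul_norm_le_of_mul_norm_sq_le_inner {F : Type*} [NormedAddCommGroup F]
    [InnerProductSpace ℝ F] {μ : ℝ} {u g : F} (h : μ * ‖u‖ ^ 2 ≤ inner ℝ u g) :
    μ * ‖u‖ ≤ ‖g‖ := by
  rcases (norm_nonneg u).eq_or_lt with hu | hu
  · rw [← hu, mul_zero]
    exact norm_nonneg g
  · refine le_of_mul_le_mul_left ?_ hu
    calc ‖u‖ * (μ * ‖u‖) = μ * ‖u‖ ^ 2 := by ring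
      _ ≤ ‖u‖ * ‖g‖ := h.trans (real_inner_le_norm u g)

section Fourier
variable {G : Type*} [AddCommGroup G] [Fintype G]

noncomputable def charCoeff (h : G → ℂ) (ψ : AddChar G ℂ) : ℂ := ∑ x, ψ (-x) * h x

lemma sum_norm_sq_charCoeff (h : G → ℂ) :
    ∑ ψ, ‖charCoeff h ψ‖ ^ 2 = Fintype.card G * ∑ x, ‖h x‖ ^ 2 := by
  classical
  apply Complex.ofReal_injective
  push_cast
  calc ∑ ψ, ((‖charCoeff h ψ‖ : ℂ)) ^ 2
      = ∑ x, ∑ y, h x * (starRingEnd ℂ) (h y) * ∑ ψ : AddChar G ℂ, ψ (y - x) := by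
        simp_rw [← Complex.mul_conj', charCoeff, map_sum, map_mul, ← AddChar.map_neg_eq_conj,
          neg_neg, sum_mul_sum, mul_sum]
        rw [sum_comm]
        refine sum_congr rfl fun x _ => ?_
        rw [sum_comm]
        refine sum_congr rfl fun y _ => sum_congr rfl fun ψ _ => ?_
        rw [sub_eq_neg_add, AddChar.map_add_eq_mul]
        ring
    _ = Fintype.card G * ∑ x, ((‖h x‖ : ℂ)) ^ 2 := by
        simp_rw [AddChar.sum_apply_eq_ite, sub_eq_zero, mul_ite, mul_zero, sum_ite_eq',
          mem_univ, if_true, Complex.mul_conj', mul_sum, mul_comm]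

lemma charCoeff_sub_translate (h : G → ℂ) (a : G) (ψ : AddChar G ℂ) :
    charCoeff (fun x => h x - h (x + a)) ψ = (1 - ψ a) * charCoeff h ψ := by
  have htranslate : ∑ x, ψ (-x) * h (x + a) = ψ a * charCoeff h ψ := by
    rw [charCoeff, mul_sum, ← sum_comp_add_right _ (-a)]
    refine sum_congr rfl fun x _ => ?_
    rw [neg_add_cancel_right, neg_add, neg_neg, AddChar.map_add_eq_mul]
    ring
  simp only [charCoeff, mul_sub, sum_sub_distrib]
  rw [htranslate, charCoeff]
  ring

lemma charCoeff_zero (h : G → ℂ) : charCoeff h 0 = ∑ x, h x := by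
  simp [charCoeff]

lemma mul_sum_norm_sq_le_sum_norm_sub_translate_sq (a : G) {c : ℝ}
    (hc : ∀ ψ : AddChar G ℂ, ψ ≠ 0 → c ≤ ‖1 - ψ a‖ ^ 2) (h : G → ℂ) (h0 : ∑ x, h x = 0) :
    c * ∑ x, ‖h x‖ ^ 2 ≤ ∑ x, ‖h x - h (x + a)‖ ^ 2 := by
  have hcard : (0 : ℝ) < Fintype.card G := by exact_mod_cast Fintype.card_pos
  refine le_of_mul_le_mul_left ?_ hcard
  calc Fintype.card G * (c * ∑ x, ‖h x‖ ^ 2) = ∑ ψ, c * ‖charCoeff h ψ‖ ^ 2 := by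
        rw [← mul_sum, sum_norm_sq_charCoeff]; ring
    _ ≤ ∑ ψ, ‖1 - ψ a‖ ^ 2 * ‖charCoeff h ψ‖ ^ 2 := by
        refine sum_le_sum fun ψ _ => ?_
        rcases eq_or_ne ψ 0 with rfl | hψ
        · simp [charCoeff_zero, h0]
        · exact mul_le_mul_of_nonneg_right (hc ψ hψ) (by positivity)
    _ = Fintype.card G * ∑ x, ‖h x - h (x + a)‖ ^ 2 := by
        simp_rw [← sum_norm_sq_charCoeff, charCoeff_sub_translate, norm_mul, mul_pow]

lemma mul_sum_norm_sq_le_sum_norm_sub_translate_sq_euclidean {ι : Type*} [Fintype ι] (a : G)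
    {c : ℝ} (hc : ∀ ψ : AddChar G ℂ, ψ ≠ 0 → c ≤ ‖1 - ψ a‖ ^ 2) (u : G → EuclideanSpace ℝ ι)
    (h0 : ∑ x, u x = 0) :
    c * ∑ x, ‖u x‖ ^ 2 ≤ ∑ x, ‖u x - u (x + a)‖ ^ 2 := by
  simp_rw [EuclideanSpace.norm_sq_eq]
  rw [sum_comm, mul_sum, sum_comm]
  refine sum_le_sum fun t _ => ?_
  have h0t : ∑ x, (u x t : ℂ) = 0 := by
    simpa [← Complex.ofReal_sum] using congrArg (fun v : EuclideanSpace ℝ ι => v t) h0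
  simpa [← Complex.ofReal_sub, Complex.norm_real] using
    mul_sum_norm_sq_le_sum_norm_sub_translate_sq a hc (fun x => (u x t : ℂ)) h0t

end Fourier

lemma sin_sq_pi_div_le_sin_sq {n k : ℕ} (hk : 0 < k) (hkn : k < n) :
    sin (π / n) ^ 2 ≤ sin (π * k / n) ^ 2 := by
  have hn : (0 : ℝ) < n := by exact_mod_cast hk.trans hkn
  -- `sin (π - x) = sin x` reduces to `k ≤ n / 2`, where `sin` is monotone.
  wlog hk2 : 2 * k ≤ n generalizing k
  · have hsym : sin (π * k / n) = sin (π * ↑(n - k) / n) := by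
      rw [Nat.cast_sub hkn.le, ← sin_pi_sub]
      congr 1
      field_simp
    rw [hsym]
    exact this (by omega) (by omega) (by omega)
  have hk' : (1 : ℝ) ≤ k := by exact_mod_cast hk
  have hk2' : 2 * (k : ℝ) ≤ n := by exact_mod_cast hk2
  gcongr
  · exact sin_nonneg_of_nonneg_of_le_pi (by positivity)
      (div_le_self pi_pos.le (by exact_mod_cast (hk.trans hkn)))
  · apply sin_le_sin_of_le_of_le_pi_div_two
    · linarith [div_pos pi_pos hn, pi_pos]
    · rw [div_le_iff₀ hn]; nlinarith [pi_pos]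
    · rw [div_le_div_iff_of_pos_right hn]; nlinarith [pi_pos]

open Fin.CommRing in
lemma four_mul_sin_sq_le_norm_one_sub_apply_one_sq {n : ℕ} [NeZero n]
    (ψ : AddChar (Fin n) ℂ) (hψ : ψ ≠ 0) : 4 * sin (π / n) ^ 2 ≤ ‖1 - ψ 1‖ ^ 2 := by
  have hroot : ψ 1 ^ n = 1 := by
    rw [← AddChar.map_nsmul_eq_pow]
    simp
  obtain ⟨k, hkn, hk⟩ := (Complex.isPrimitiveRoot_exp n (NeZero.ne n)).eq_pow_of_pow_eq_one hroot
  have hk0 : 0 < k := by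
    refine Nat.pos_of_ne_zero fun hk0 => hψ ?_
    ext x
    rw [hk0, pow_zero] at hk
    have hx : (x : ℕ) • (1 : Fin n) = x := by simp
    rw [AddChar.zero_apply, ← hx, AddChar.map_nsmul_eq_pow, ← hk, one_pow]
  have hexp : ψ 1 = Complex.exp (Complex.I * ((2 * π * k / n : ℝ) : ℂ)) := by
    rw [← hk, ← Complex.exp_nat_mul]
    congr 1
    push_cast
    ring
  have hhalf : 2 * π * k / n / 2 = π * k / n := by ring
  rw [hexp, norm_sub_rev, Complex.norm_exp_I_mul_ofReal_sub_one, hhalf, norm_mul, mul_pow,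
    Real.norm_two, Real.norm_eq_abs, sq_abs]
  linarith [sin_sq_pi_div_le_sin_sq hk0 hkn]

section Circulant
variable {n : ℕ} [NeZero n]

lemma sum_Bmat_smul {E : Type*} [AddCommGroup E] [Module ℝ E] (u : Fin n → E) (i : Fin n) :
    ∑ j, Bmat n i j • u j = (3 : ℝ) • u i - u (i + 1) - u (i - 1) := by
  have hpred : ∀ j : Fin n, i = j + 1 ↔ j = i - 1 := fun j => by rw [eq_sub_iff_add_eq, eq_comm]
  simp_rw [Bmat, Matrix.sub_apply, Matrix.smul_apply, one_apply, transpose_apply, shiftMat,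
    of_apply, hpred, sub_smul, sum_sub_distrib]
  simp [ite_smul]

lemma sum_sum_Bmat_smul {E : Type*} [AddCommGroup E] [Module ℝ E] (u : Fin n → E) :
    ∑ i, ∑ j, Bmat n i j • u j = ∑ i, u i := by
  simp_rw [sum_Bmat_smul, sum_sub_distrib]
  simp_rw [← smul_sum, sub_eq_add_neg _ (1 : Fin n), sum_comp_add_right u]
  module

lemma sum_inner_sum_Bmat_smul {E : Type*} [NormedAddCommGroup E] [InnerProductSpace ℝ E]
    (u : Fin n → E) :
    ∑ i, inner ℝ (u i) (∑ j, Bmat n i j • u j) = ∑ i, ‖u i‖ ^ 2 + ∑ i, ‖u i - u (i + 1)‖ ^ 2 := by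
  have hback : ∑ i, inner ℝ (u i) (u (i - 1)) = ∑ i, inner ℝ (u i) (u (i + 1)) := by
    rw [← sum_comp_add_right _ 1]
    refine sum_congr rfl fun i _ => ?_
    rw [add_sub_cancel_right, real_inner_comm]
  have hfwd : ∑ i, ‖u (i + 1)‖ ^ 2 = ∑ i, ‖u i‖ ^ 2 := sum_comp_add_right (‖u ·‖ ^ 2) 1
  simp_rw [sum_Bmat_smul, inner_sub_right, real_inner_smul_right, real_inner_self_eq_norm_sq,
    norm_sub_sq_real, sum_add_distrib, sum_sub_distrib, ← mul_sum, hback, hfwd]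
  ring

lemma posDef_Bmat : (Bmat n).PosDef := by
  refine PosDef.of_dotProduct_mulVec_pos ?_ fun v hv => ?_
  · simp [IsHermitian, Bmat, sub_sub, add_comm]
  · have hquad : star v ⬝ᵥ (Bmat n *ᵥ v) = ∑ i, v i ^ 2 + ∑ i, (v i - v (i + 1)) ^ 2 := by
      simpa [dotProduct, mulVec, mul_comm] using sum_inner_sum_Bmat_smul v
    obtain ⟨i, hi⟩ := Function.ne_iff.mp hv
    have hpos : 0 < ∑ i, v i ^ 2 :=
      (sq_pos_of_ne_zero hi).trans_le (single_le_sum (fun j _ => sq_nonneg (v j)) (mem_univ i))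
    rw [hquad]
    exact add_pos_of_pos_of_nonneg hpos (by positivity)

end Circulant

section ApplyMat
variable {n : ℕ}

lemma applyMat_one (g : Fin n → EuclideanSpace ℝ (Fin 3)) : applyMat 1 g = g := by
  funext i
  simp [applyMat, one_apply, ite_smul]

lemma applyMat_mul (M N : Matrix (Fin n) (Fin n) ℝ) (g : Fin n → EuclideanSpace ℝ (Fin 3)) :
    applyMat (M * N) g = applyMat M (applyMat N g) := by
  funext i
  simp_rw [applyMat, mul_apply, sum_smul, smul_sum, mul_smul]
  exact sum_comm

lemma applyMat_sub (M : Matrix (Fin n) (Fin n) ℝ) (g g' : Fin n → EuclideanSpace ℝ (Fin 3)) :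
    applyMat M (g - g') = applyMat M g - applyMat M g' := by
  funext i
  simp [applyMat, smul_sub, sum_sub_distrib]

lemma sqE_eq_norm_sq (g : Fin n → EuclideanSpace ℝ (Fin 3)) :
    sqE g = ‖WithLp.toLp 2 g‖ ^ 2 := by
  simp [sqE, PiLp.norm_sq_eq_of_L2]

end ApplyMat

section Cycle
variable {n : ℕ} [NeZero n]

lemma four_mul_sin_sq_mul_sqE_le (u : Fin n → EuclideanSpace ℝ (Fin 3)) (h0 : ∑ i, u i = 0) :
    4 * sin (π / n) ^ 2 * sqE u ≤ sqE (u - shiftTup u) :=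
  mul_sum_norm_sq_le_sum_norm_sub_translate_sq_euclidean 1
    four_mul_sin_sq_le_norm_one_sub_apply_one_sq u h0

lemma sum_sub_shiftTup (g : Fin n → EuclideanSpace ℝ (Fin 3)) : ∑ i, (g - shiftTup g) i = 0 := by
  simp only [Pi.sub_apply, shiftTup, sum_sub_distrib, sum_comp_add_right g 1, sub_self]

lemma applyMat_shiftMat (g : Fin n → EuclideanSpace ℝ (Fin 3)) :
    applyMat (shiftMat n) g = shiftTup g := by
  funext i
  simp [applyMat, shiftMat, shiftTup, ite_smul]

lemma shiftTup_applyMat_of_commute {M : Matrix (Fin n) (Fin n) ℝ} (hM : Commute M (shiftMat n))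
    (g : Fin n → EuclideanSpace ℝ (Fin 3)) :
    shiftTup (applyMat M g) = applyMat M (shiftTup g) := by
  rw [← applyMat_shiftMat, ← applyMat_mul, ← hM.eq, applyMat_mul, applyMat_shiftMat]

lemma isUnit_Bmat : IsUnit (Bmat n) := posDef_Bmat.isUnit

lemma Bmat_mul_Amat : Bmat n * Amat n = 1 :=
  mul_nonsing_inv _ ((isUnit_iff_isUnit_det _).mp isUnit_Bmat)

lemma commute_Amat_shiftMat : Commute (Amat n) (shiftMat n) := by
  have hB : Commute (Bmat n) (shiftMat n) := by
    have hTTt : shiftMat n * (shiftMat n)ᵀ = 1 := by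
      ext i j
      simp [mul_apply, shiftMat, one_apply, eq_comm]
    have hTtT : (shiftMat n)ᵀ * shiftMat n = 1 := mul_eq_one_comm.mp hTTt
    simp only [Commute, SemiconjBy, Bmat, sub_mul, mul_sub, smul_mul_assoc, mul_smul_comm,
      one_mul, mul_one, hTTt, hTtT]
  have hcomm := Commute.units_inv_left (u := (isUnit_Bmat (n := n)).unit) hB
  rwa [coe_units_inv, IsUnit.unit_spec] at hcomm

lemma applyMat_Bmat_applyMat_Amat (g : Fin n → EuclideanSpace ℝ (Fin 3)) :
    applyMat (Bmat n) (applyMat (Amat n) g) = g := by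
  rw [← applyMat_mul, Bmat_mul_Amat, applyMat_one]

lemma sum_applyMat_Amat (g : Fin n → EuclideanSpace ℝ (Fin 3)) :
    ∑ i, applyMat (Amat n) g i = ∑ i, g i := by
  conv_rhs => rw [← applyMat_Bmat_applyMat_Amat g]
  exact (sum_sum_Bmat_smul (applyMat (Amat n) g)).symm

lemma sqE_applyMat_Amat_le (g : Fin n → EuclideanSpace ℝ (Fin 3)) (hg : ∑ i, g i = 0) :
    sqE (applyMat (Amat n) g) ≤ lam1 n ^ 2 * sqE g := by
  set u := applyMat (Amat n) g
  set μ := 1 + 4 * sin (π / n) ^ 2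
  have hcoercive : μ * sqE u ≤ ∑ i, inner ℝ (u i) (g i) :=
    calc μ * sqE u = sqE u + 4 * sin (π / n) ^ 2 * sqE u := by ring
      _ ≤ sqE u + sqE (u - shiftTup u) := by
          gcongr
          exact four_mul_sin_sq_mul_sqE_le u (by rw [sum_applyMat_Amat, hg])
      _ = ∑ i, inner ℝ (u i) (applyMat (Bmat n) u i) := (sum_inner_sum_Bmat_smul u).symm
      _ = ∑ i, inner ℝ (u i) (g i) := by rw [applyMat_Bmat_applyMat_Amat]
  have hμ : μ * ‖WithLp.toLp 2 u‖ ≤ ‖WithLp.toLp 2 g‖ :=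
    mul_norm_le_of_mul_norm_sq_le_inner <| by
      simpa [sqE_eq_norm_sq, PiLp.inner_apply] using hcoercive
  rw [sqE_eq_norm_sq, sqE_eq_norm_sq, lam1, div_pow, one_pow, div_mul_eq_mul_div, one_mul,
    le_div_iff₀ (by positivity), ← mul_pow]
  exact pow_le_pow_left₀ (by positivity) (by linarith) 2

lemma sqE_applyMat_Amat_pow_le (k : ℕ) (g : Fin n → EuclideanSpace ℝ (Fin 3))
    (hg : ∑ i, g i = 0) : sqE (applyMat (Amat n ^ k) g) ≤ lam1 n ^ (2 * k) * sqE g := by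
  induction k generalizing g with
  | zero => simp [applyMat_one]
  | succ k ih =>
    rw [pow_succ, applyMat_mul, pow_mul]
    calc sqE (applyMat (Amat n ^ k) (applyMat (Amat n) g))
        ≤ (lam1 n ^ 2) ^ k * sqE (applyMat (Amat n) g) := by
          rw [← pow_mul]
          exact ih _ (by rw [sum_applyMat_Amat, hg])
      _ ≤ (lam1 n ^ 2) ^ k * (lam1 n ^ 2 * sqE g) := by
          gcongr
          exact sqE_applyMat_Amat_le g hg
      _ = (lam1 n ^ 2) ^ (k + 1) * sqE g := by ring

end Cycle

theorem stmt14_general (n : ℕ) [NeZero n] (f0 : Fin n → EuclideanSpace ℝ (Fin 3)) (k : ℕ) :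
    sqE (applyMat (Amat n ^ k) f0 - shiftTup (applyMat (Amat n ^ k) f0)) ≤
      lam1 n ^ (2 * k) * sqE (f0 - shiftTup f0) := by
  rw [shiftTup_applyMat_of_commute (commute_Amat_shiftMat.pow_left k), ← applyMat_sub]
  exact sqE_applyMat_Amat_pow_le k _ (sum_sub_shiftTup f0)

theorem stmt14 (n : ℕ) [NeZero n] (hn : 3 ≤ n) (f0 : Fin n → EuclideanSpace ℝ (Fin 3)) (k : ℕ) :
    sqE (applyMat (Amat n ^ k) f0 - shiftTup (applyMat (Amat n ^ k) f0)) ≤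
      lam1 n ^ (2 * k) * sqE (f0 - shiftTup f0) :=
  stmt14_general n f0 k
end
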